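/- arXiv:1804.08259 — 4 statements merged into one kernel-verified Lean document; each statement's English description precedes it below -/
import Mathlib

section
/- Assume further: (continuity) there is C_cont > 0 with |a_h(z,w)| ≤ C_cont · |||z|||_a · ‖w‖_a for all z ∈ V and all w ∈ Y; (quasi-Cauchy–Schwarz stabilization) there is C_stab > 0 with s_h(w,v) ≤ C_stab · s_h(w,w)^{1/2} · s_h(v,v)^{1/2} for all w, v ∈ X; (inconsistency bound) there is K ≥ 0 with |ℓ_h(w) − ℓ(w)| + |a(u,w) − a_h(u,w)| ≤ K · ‖w‖_a for all w in the range of E. Then for every v_h ∈ X, (1/2)·‖u − E(u_h)‖_a² + C_coer⁻¹ · s_h(u_h,u_h) ≤ (1 + 2·C_cont²/C_coer²) · |||u − E(v_h)|||_a² + (C_stab²/C_coer) · s_h(v_h,v_h) + 2·K²/C_coer². -/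
private lemma rfem_aux (C_coer C_cont C_stab K M N Su Sv x : ℝ)
    (hCcoer : 0 < C_coer) (hN0 : 0 ≤ N) (hM0 : 0 ≤ M)
    (hSu0 : 0 ≤ Su) (hSv0 : 0 ≤ Sv) (hx0 : 0 ≤ x) (hxs : x ≤ M + N)
    (main : C_coer * N ^ 2 + Su ≤
      C_cont * M * N + K * N + C_stab * Real.sqrt Su * Real.sqrt Sv) :
    (1/2) * x ^ 2 + C_coer⁻¹ * Su ≤
      (1 + 2 * C_cont ^ 2 / C_coer ^ 2) * M ^ 2
        + (C_stab ^ 2 / C_coer) * Sv + 2 * K ^ 2 / C_coer ^ 2 := by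
  have hrSu : Real.sqrt Su ^ 2 = Su := Real.sq_sqrt hSu0
  have hrSv : Real.sqrt Sv ^ 2 = Sv := Real.sq_sqrt hSv0
  have hrSu0 : 0 ≤ Real.sqrt Su := Real.sqrt_nonneg _
  have hrSv0 : 0 ≤ Real.sqrt Sv := Real.sqrt_nonneg _
  have hC2 : (0:ℝ) < C_coer ^ 2 := by positivity
  have h4 : C_coer ^ 2 * N ^ 2 + C_coer * Su ≤
      2 * C_cont ^ 2 * M ^ 2 + C_coer * C_stab ^ 2 * Sv + 2 * K ^ 2 := by
    have young3 : C_coer * (C_stab * Real.sqrt Su * Real.sqrt Sv) ≤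
        C_coer * (Su / 2 + C_stab ^ 2 * Sv / 2) := by
      have h := sq_nonneg (Real.sqrt Su - C_stab * Real.sqrt Sv)
      have : C_stab * Real.sqrt Su * Real.sqrt Sv ≤ Su / 2 + C_stab ^ 2 * Sv / 2 := by
        nlinarith [h]
      exact mul_le_mul_of_nonneg_left this hCcoer.le
    have hm : C_coer * (C_coer * N ^ 2 + Su) ≤
        C_coer * (C_cont * M * N + K * N + C_stab * Real.sqrt Su * Real.sqrt Sv) :=
      mul_le_mul_of_nonneg_left main hCcoer.le
    nlinarith [hm, young3, sq_nonneg (C_coer * N - 2 * C_cont * M),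
      sq_nonneg (C_coer * N - 2 * K)]
  have h5 : N ^ 2 + C_coer⁻¹ * Su ≤
      2 * C_cont ^ 2 / C_coer ^ 2 * M ^ 2 + C_stab ^ 2 / C_coer * Sv
        + 2 * K ^ 2 / C_coer ^ 2 := by
    have e1 : N ^ 2 + C_coer⁻¹ * Su = (C_coer ^ 2 * N ^ 2 + C_coer * Su) / C_coer ^ 2 := by
      field_simp
    have e2 : 2 * C_cont ^ 2 / C_coer ^ 2 * M ^ 2 + C_stab ^ 2 / C_coer * Sv
        + 2 * K ^ 2 / C_coer ^ 2 =
        (2 * C_cont ^ 2 * M ^ 2 + C_coer * C_stab ^ 2 * Sv + 2 * K ^ 2) / C_coer ^ 2 := by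
      field_simp
    rw [e1, e2]
    gcongr
  have hsq : x ^ 2 ≤ (M + N) ^ 2 := pow_le_pow_left₀ hx0 hxs 2
  nlinarith [h5, hsq, sq_nonneg (M - N)]

/-- R-FEM abstract best-approximation bound (Lemma in Section 4).
Context: `V` a real vector space with seminorms `na = ‖·‖_a` and `ma = |||·|||_a`
with `na ≤ ma`; `X`, `Y` subspaces; `E : X → Y` linear (recovery operator);
`a_h`, `a` bilinear forms on `V`; `ℓ`, `ℓ_h` linear functionals on `V`;
`s_h` a symmetric nonnegative bilinear form on `X`. -/
theorem rfem_best_approximation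
    {V : Type*} [AddCommGroup V] [Module ℝ V]
    (na ma : Seminorm ℝ V)
    (hnm : ∀ w : V, na w ≤ ma w)
    (X Y : Submodule ℝ V) (E : X →ₗ[ℝ] Y)
    (a_h a : V →ₗ[ℝ] V →ₗ[ℝ] ℝ)
    (ℓ ℓ_h : V →ₗ[ℝ] ℝ)
    (s_h : X →ₗ[ℝ] X →ₗ[ℝ] ℝ)
    (hsym : ∀ w v : X, s_h w v = s_h v w)
    (hnonneg : ∀ w : X, 0 ≤ s_h w w)
    (C_coer : ℝ) (hCcoer : 0 < C_coer)
    (hcoer : ∀ w : Y, C_coer * (na (w : V))^2 ≤ a_h (w : V) (w : V))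
    (u_h : X)
    (hRFEM : ∀ v_h : X,
      a_h ((E u_h : Y) : V) ((E v_h : Y) : V) + s_h u_h v_h = ℓ_h ((E v_h : Y) : V))
    (u : V) (hexact : ∀ v : V, a u v = ℓ v)
    -- continuity
    (C_cont : ℝ) (hCcont : 0 < C_cont)
    (hcont : ∀ z : V, ∀ w : Y, |a_h z (w : V)| ≤ C_cont * ma z * na (w : V))
    -- quasi-Cauchy–Schwarz stabilization
    (C_stab : ℝ) (hCstab : 0 < C_stab)
    (hstab : ∀ w v : X,
      s_h w v ≤ C_stab * Real.sqrt (s_h w w) * Real.sqrt (s_h v v))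
    -- inconsistency bound on the range of E
    (K : ℝ) (hK : 0 ≤ K)
    (hinc : ∀ x : X,
      |ℓ_h ((E x : Y) : V) - ℓ ((E x : Y) : V)|
        + |a u ((E x : Y) : V) - a_h u ((E x : Y) : V)| ≤ K * na ((E x : Y) : V)) :
    ∀ v_h : X,
      (1/2) * (na (u - ((E u_h : Y) : V)))^2 + C_coer⁻¹ * s_h u_h u_h ≤
        (1 + 2 * C_cont^2 / C_coer^2) * (ma (u - ((E v_h : Y) : V)))^2
          + (C_stab^2 / C_coer) * s_h v_h v_h
          + 2 * K^2 / C_coer^2 := by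
  intro v_h
  set δ : X := u_h - v_h with hδ
  set e : V := ((E u_h : Y) : V) - ((E v_h : Y) : V) with he
  have hEδ : ((E δ : Y) : V) = e := by
    simp [hδ, he, map_sub]
  set N := na e with hN
  set M := ma (u - ((E v_h : Y) : V)) with hM
  set Su := s_h u_h u_h with hSu
  set Sv := s_h v_h v_h with hSv
  have hN0 : 0 ≤ N := apply_nonneg na e
  have hM0 : 0 ≤ M := apply_nonneg ma _
  have hSu0 : 0 ≤ Su := hnonneg u_h
  have hSv0 : 0 ≤ Sv := hnonneg v_h
  have hrSu : Real.sqrt Su ^ 2 = Su := Real.sq_sqrt hSu0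
  have hrSv : Real.sqrt Sv ^ 2 = Sv := Real.sq_sqrt hSv0
  have hrSu0 : 0 ≤ Real.sqrt Su := Real.sqrt_nonneg _
  have hrSv0 : 0 ≤ Real.sqrt Sv := Real.sqrt_nonneg _
  -- key identity
  have h1 := hRFEM δ
  rw [hEδ] at h1
  have h2 : s_h u_h δ = Su - s_h u_h v_h := by
    simp [hδ, hSu, map_sub]
  have h3 : ℓ e = a u e := (hexact e).symm
  have haee : a_h e e = a_h ((E u_h : Y) : V) e - a_h ((E v_h : Y) : V) e := by
    simp only [he, map_sub, LinearMap.sub_apply]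
    ring
  have hdiff : a_h (u - ((E v_h : Y) : V)) e = a_h u e - a_h ((E v_h : Y) : V) e := by
    simp only [he, map_sub, LinearMap.sub_apply]
    ring
  have key : a_h e e + Su =
      a_h (u - ((E v_h : Y) : V)) e + ((ℓ_h e - ℓ e) + (a u e - a_h u e))
        + s_h u_h v_h := by
    rw [hdiff]; linarith [h1, h2, h3]
  -- bounds
  have hb1 : a_h (u - ((E v_h : Y) : V)) e ≤ C_cont * M * N := by
    have := hcont (u - ((E v_h : Y) : V)) (E δ)
    rw [hEδ] at this
    exact le_trans (le_abs_self _) this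
  have hb2 : (ℓ_h e - ℓ e) + (a u e - a_h u e) ≤ K * N := by
    have h := hinc δ
    rw [hEδ] at h
    have := abs_add_le (ℓ_h e - ℓ e) (a u e - a_h u e)
    calc (ℓ_h e - ℓ e) + (a u e - a_h u e)
        ≤ |(ℓ_h e - ℓ e) + (a u e - a_h u e)| := le_abs_self _
      _ ≤ |ℓ_h e - ℓ e| + |a u e - a_h u e| := abs_add_le _ _
      _ ≤ K * N := h
  have hb3 : s_h u_h v_h ≤ C_stab * Real.sqrt Su * Real.sqrt Sv := hstab u_h v_h
  have hco : C_coer * N ^ 2 ≤ a_h e e := by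
    have := hcoer (E δ)
    rw [hEδ] at this
    exact this
  -- main estimate
  have main : C_coer * N ^ 2 + Su ≤
      C_cont * M * N + K * N + C_stab * Real.sqrt Su * Real.sqrt Sv := by
    linarith
  have hx0 : 0 ≤ na (u - ((E u_h : Y) : V)) := apply_nonneg na _
  have htri : na (u - ((E u_h : Y) : V)) ≤ M + N := by
    have hrw : u - ((E u_h : Y) : V) = (u - ((E v_h : Y) : V)) - e := by
      rw [he]; abel
    rw [hrw]
    calc na ((u - ((E v_h : Y) : V)) - e)
        ≤ na (u - ((E v_h : Y) : V)) + na e := map_sub_le_add na _ _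
      _ ≤ M + N := by
          have := hnm (u - ((E v_h : Y) : V))
          rw [hM, hN]; linarith
  exact rfem_aux C_coer C_cont C_stab K M N Su Sv _ hCcoer hN0 hM0 hSu0 hSv0 hx0 htri main
end

section
/- For every v_h ∈ X, setting ξ := E(v_h − u_h) ∈ Y, one has the inequality C_coer·‖ξ‖_a² + s_h(u_h,u_h) ≤ a_h(E(v_h) − u, ξ) + s_h(u_h, v_h) + (ℓ(ξ) − ℓ_h(ξ)) + (a_h(u,ξ) − a(u,ξ)). -/
/-- First step of the R-FEM best-approximation proof: coercivity + Galerkin relation.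
Context as in the abstract R-FEM framework: `V` a real vector space with seminorms
`na = ‖·‖_a`, `ma = |||·|||_a` with `na ≤ ma`; `X`, `Y` subspaces; `E : X → Y`
linear; `a_h`, `a` bilinear forms on `V`; `ℓ`, `ℓ_h` linear functionals;
`s_h` a symmetric nonnegative bilinear form on `X`. -/
theorem rfem_coercivity_step
    {V : Type*} [AddCommGroup V] [Module ℝ V]
    (na ma : Seminorm ℝ V)
    (hnm : ∀ w : V, na w ≤ ma w)
    (X Y : Submodule ℝ V) (E : X →ₗ[ℝ] Y)
    (a_h a : V →ₗ[ℝ] V →ₗ[ℝ] ℝ)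
    (ℓ ℓ_h : V →ₗ[ℝ] ℝ)
    (s_h : X →ₗ[ℝ] X →ₗ[ℝ] ℝ)
    (hsym : ∀ w v : X, s_h w v = s_h v w)
    (hnonneg : ∀ w : X, 0 ≤ s_h w w)
    (C_coer : ℝ) (hCcoer : 0 < C_coer)
    (hcoer : ∀ w : Y, C_coer * (na (w : V))^2 ≤ a_h (w : V) (w : V))
    (u_h : X)
    (hRFEM : ∀ v_h : X,
      a_h ((E u_h : Y) : V) ((E v_h : Y) : V) + s_h u_h v_h = ℓ_h ((E v_h : Y) : V))
    (u : V) (hexact : ∀ v : V, a u v = ℓ v) :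
    ∀ v_h : X,
      C_coer * (na ((E (v_h - u_h) : Y) : V))^2 + s_h u_h u_h ≤
        a_h (((E v_h : Y) : V) - u) ((E (v_h - u_h) : Y) : V)
          + s_h u_h v_h
          + (ℓ ((E (v_h - u_h) : Y) : V) - ℓ_h ((E (v_h - u_h) : Y) : V))
          + (a_h u ((E (v_h - u_h) : Y) : V) - a u ((E (v_h - u_h) : Y) : V)) := by
  intro v_h
  set ξ : V := ((E (v_h - u_h) : Y) : V) with hξ
  have hE : ξ = ((E v_h : Y) : V) - ((E u_h : Y) : V) := by
    rw [hξ, map_sub]; rfl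
  have hcoe := hcoer (E (v_h - u_h))
  have hgal := hRFEM (v_h - u_h)
  have hsub : s_h u_h (v_h - u_h) = s_h u_h v_h - s_h u_h u_h := by
    simp [map_sub]
  have hexactξ := hexact ξ
  rw [hsub] at hgal
  have h1 : a_h ξ ξ = a_h ((E v_h : Y) : V) ξ - a_h ((E u_h : Y) : V) ξ := by
    rw [hE]; simp [map_sub]; ring
  have h2 : a_h (((E v_h : Y) : V) - u) ξ = a_h ((E v_h : Y) : V) ξ - a_h u ξ := by
    simp [map_sub]
  rw [← hξ] at hgal
  linarith [hcoe, hgal, h1, h2, hexactξ]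
end

section
/- Suppose there are p ∈ X, q ∈ Y and ε ≥ 0 with M(u − p) ≤ ε and M(u − q) ≤ ε (optimal approximation by the L²-projections onto the discrete and conforming spaces), and a constant C₃ ≥ 0 such that |ℓ_h(w) − ℓ(w)| + |a(u,w) − a_h(u,w)| ≤ C₃·ε·N(w) for all w in the range of E (optimal-order inconsistency). Then there exists a constant C > 0, depending only on C_coer, C_cont, C_stab, c_ker, C_ker, C₁, C₂, C₃ (and not on u, u_h, p, q, ε), such that N(u − E(u_h))² + s_h(u_h,u_h) ≤ C·ε². -/
private lemma rfem_young_aux (Ccoer Cst K2 A n S ε : ℝ) (hC : 0 < Ccoer)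
    (hkey : Ccoer*n^2 + S^2 ≤ A*ε*n + Cst*S*(K2*ε)) :
    Ccoer^2*n^2 + Ccoer*S^2 ≤ (A^2 + Ccoer*Cst^2*K2^2)*ε^2 := by
  nlinarith [sq_nonneg (Ccoer*n - A*ε), sq_nonneg (S - Cst*K2*ε), hC.le,
    sq_nonneg S, sq_nonneg n, mul_pos hC hC]

set_option maxHeartbeats 1000000 in
/-- A priori error bound for R-FEM (Theorem `thm:abstract`): the recovered
(conforming) approximation `E u_h` satisfies an optimal-order bound in the
broken energy norm `N`, with a constant depending only on the structural
constants and not on `u`, `u_h`, `p`, `q`, `ε` (nor on the spaces/forms). -/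
theorem rfem_apriori_recovered
    (C_coer C_cont C_stab c_ker C_ker C₁ C₂ C₃ : ℝ)
    (hCcoer : 0 < C_coer) (hCcont : 0 < C_cont) (hCstab : 0 < C_stab)
    (hcker : 0 < c_ker) (hCker : 0 < C_ker)
    (hC1 : 0 < C₁) (hC2 : 0 < C₂) (hC3 : 0 ≤ C₃) :
    ∃ C : ℝ, 0 < C ∧
      ∀ (W : Type) (_ : AddCommGroup W) (_ : Module ℝ W)
        (N M : Seminorm ℝ W)
        (X Y : Submodule ℝ W) (E : W →ₗ[ℝ] W)
        (s_h a_h a : W →ₗ[ℝ] W →ₗ[ℝ] ℝ)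
        (ℓ ℓ_h : W →ₗ[ℝ] ℝ)
        (u u_h p q : W) (ε : ℝ),
        -- norm comparison
        (∀ w : W, N w ≤ C₁ * M w) →
        -- recovery operator: maps into Y, identity on Y, M-stable
        (∀ w : W, E w ∈ Y) →
        (∀ v ∈ Y, E v = v) →
        (∀ w : W, M (E w) ≤ C₂ * M w) →
        -- stabilization: symmetric, nonnegative, quasi-Cauchy–Schwarz, kernel equivalence
        (∀ w v : W, s_h w v = s_h v w) →
        (∀ w : W, 0 ≤ s_h w w) →
        (∀ w v : W, s_h w v ≤ C_stab * Real.sqrt (s_h w w) * Real.sqrt (s_h v v)) →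
        (∀ w : W, c_ker * s_h w w ≤ (N (w - E w))^2 ∧ (N (w - E w))^2 ≤ C_ker * s_h w w) →
        -- coercivity and continuity
        (∀ w ∈ Y, C_coer * (N w)^2 ≤ a_h w w) →
        (∀ z : W, ∀ w ∈ Y, |a_h z w| ≤ C_cont * M z * N w) →
        -- R-FEM solution and exact solution
        u_h ∈ X →
        (∀ v_h ∈ X, a_h (E u_h) (E v_h) + s_h u_h v_h = ℓ_h (E v_h)) →
        (∀ v ∈ Y, a u v = ℓ v) →
        -- optimal approximation by projections
        p ∈ X → q ∈ Y → 0 ≤ ε → M (u - p) ≤ ε → M (u - q) ≤ ε →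
        -- optimal-order inconsistency on the range of E
        (∀ w ∈ Set.range E, |ℓ_h w - ℓ w| + |a u w - a_h u w| ≤ C₃ * ε * N w) →
        (N (u - E u_h))^2 + s_h u_h u_h ≤ C * ε^2 := by
  have hsc : 0 < Real.sqrt c_ker := Real.sqrt_pos.mpr hcker
  set K1 : ℝ := C₁ * (1 + 2*C₂) with hK1def
  set K2 : ℝ := 2*C₁*(1+C₂) / Real.sqrt c_ker with hK2def
  set A : ℝ := C₃ + C_cont*(1+2*C₂) with hAdef
  set D : ℝ := A^2 + C_coer*C_stab^2*K2^2 with hDdef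
  have hK1 : 0 ≤ K1 := by rw [hK1def]; positivity
  have hK2 : 0 ≤ K2 := by rw [hK2def]; positivity
  have hA : 0 ≤ A := by rw [hAdef]; positivity
  have hD : 0 ≤ D := by rw [hDdef]; positivity
  clear_value K1 K2 A D
  refine ⟨1 + 2*K1^2 + (2/C_coer^2 + 1/C_coer)*D, ?_, ?_⟩
  · have h4 : 0 ≤ (2/C_coer^2 + 1/C_coer)*D := mul_nonneg (by positivity) hD
    have h5 : (0:ℝ) ≤ K1^2 := sq_nonneg K1
    linarith
  intro W _ _ N M X Y E s_h a_h a ℓ ℓ_h u u_h p q ε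
    hNM hEY hEid hEstab hsym hsnn hsCS hker hcoer hcont huhX heq hex hpX hqY hε hup huq hinc
  have hεsq : 0 ≤ ε^2 := sq_nonneg ε
  have hEq : E q = q := hEid q hqY
  -- Step 1: M (u - E p) ≤ (1+2C₂) ε
  have hid1 : u - E p = (u - q) + (E (q - u) + E (u - p)) := by
    rw [map_sub, map_sub, hEq]; abel
  have hqu : M (E (q - u)) ≤ C₂ * ε := by
    refine le_trans (hEstab _) ?_
    rw [map_sub_rev]
    exact mul_le_mul_of_nonneg_left huq hC2.le
  have hupE : M (E (u - p)) ≤ C₂ * ε := by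
    refine le_trans (hEstab _) ?_
    exact mul_le_mul_of_nonneg_left hup hC2.le
  have hMuEp : M (u - E p) ≤ (1 + 2*C₂) * ε := by
    calc M (u - E p) ≤ M (u - q) + M (E (q - u) + E (u - p)) := by
          rw [hid1]; exact map_add_le_add M _ _
      _ ≤ M (u - q) + (M (E (q - u)) + M (E (u - p))) := by
          gcongr; exact map_add_le_add M _ _
      _ ≤ (1 + 2*C₂) * ε := by linarith
  have hNuEp : N (u - E p) ≤ K1 * ε := by
    refine le_trans (hNM _) ?_
    rw [hK1def, mul_assoc]
    exact mul_le_mul_of_nonneg_left hMuEp hC1.le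
  -- Step 2: N (p - E p) ≤ 2C₁(1+C₂) ε
  have hid2 : p - E p = (p - u) + ((u - q) + E (q - p)) := by
    rw [map_sub, hEq]; abel
  have huq' : M (q - u) ≤ ε := by rw [map_sub_rev]; exact huq
  have hqp : M (E (q - p)) ≤ C₂ * (2*ε) := by
    refine le_trans (hEstab _) ?_
    have h1 : M (q - p) ≤ M (q - u) + M (u - p) := by
      have := map_add_le_add M (q - u) (u - p)
      simpa using this
    have h2 : M (q - p) ≤ 2*ε := by linarith
    exact mul_le_mul_of_nonneg_left h2 hC2.le
  have hMpu : M (p - u) ≤ ε := by rw [map_sub_rev]; exact hup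
  have hNpEp : N (p - E p) ≤ 2*C₁*(1+C₂) * ε := by
    have hM : M (p - E p) ≤ 2*(1+C₂)*ε := by
      calc M (p - E p) ≤ M (p - u) + M ((u - q) + E (q - p)) := by
            rw [hid2]; exact map_add_le_add M _ _
        _ ≤ M (p - u) + (M (u - q) + M (E (q - p))) := by
            gcongr; exact map_add_le_add M _ _
        _ ≤ 2*(1+C₂)*ε := by linarith
    calc N (p - E p) ≤ C₁ * M (p - E p) := hNM _
      _ ≤ C₁ * (2*(1+C₂)*ε) := mul_le_mul_of_nonneg_left hM hC1.le
      _ = 2*C₁*(1+C₂) * ε := by ring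
  -- Step 3: sqrt (s_h p p) ≤ K2 ε
  have hsppnn : 0 ≤ s_h p p := hsnn p
  have hspp : s_h p p ≤ (K2 * ε)^2 := by
    have h1 := (hker p).1
    have h2 : (N (p - E p))^2 ≤ (2*C₁*(1+C₂)*ε)^2 :=
      pow_le_pow_left₀ (apply_nonneg N _) hNpEp 2
    have h3 : (K2 * ε)^2 = (2*C₁*(1+C₂)*ε)^2 / c_ker := by
      rw [hK2def, div_mul_eq_mul_div, div_pow, Real.sq_sqrt hcker.le]
    rw [h3, le_div_iff₀ hcker]
    linarith
  have hsqp : Real.sqrt (s_h p p) ≤ K2 * ε := by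
    have := Real.sqrt_le_sqrt hspp
    rwa [Real.sqrt_sq (by positivity)] at this
  -- Step 4: key energy identity and inequality
  set η : W := E u_h - E p with hη
  have hηY : η ∈ Y := Y.sub_mem (hEY u_h) (hEY p)
  have hηrange : η ∈ Set.range E := ⟨u_h - p, by rw [map_sub, hη]⟩
  set n : ℝ := N η with hn
  have hnnn : 0 ≤ n := by rw [hn]; exact apply_nonneg N η
  set S : ℝ := Real.sqrt (s_h u_h u_h) with hS
  have hSnn : 0 ≤ S := by rw [hS]; exact Real.sqrt_nonneg _
  have hS2 : S^2 = s_h u_h u_h := by rw [hS]; exact Real.sq_sqrt (hsnn u_h)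
  have hdX : u_h - p ∈ X := X.sub_mem huhX hpX
  have heq1 : a_h (E u_h) η + s_h u_h (u_h - p) = ℓ_h η := by
    have h := heq (u_h - p) hdX
    rw [map_sub] at h
    rw [hη]; exact h
  have hsplit : s_h u_h (u_h - p) = s_h u_h u_h - s_h u_h p := by
    rw [map_sub]
  have hex1 : a u η = ℓ η := hex η hηY
  have hcoe : C_coer * n^2 ≤ a_h η η := by rw [hn]; exact hcoer η hηY
  have hahη : a_h η η = a_h (E u_h) η - a_h (E p) η := by
    have h : a_h η = a_h (E u_h) - a_h (E p) := by rw [hη, map_sub]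
    rw [h, LinearMap.sub_apply]
  have hdiff : a_h u η - a_h (E p) η = a_h (u - E p) η := by
    simp only [map_sub, LinearMap.sub_apply]
  have hinc1 : ℓ_h η - ℓ η + (a u η - a_h u η) ≤ C₃ * ε * n := by
    have h := hinc η hηrange
    have h1 := le_abs_self (ℓ_h η - ℓ η)
    have h2 := le_abs_self (a u η - a_h u η)
    rw [hn]; linarith
  have hcont1 : a_h (u - E p) η ≤ C_cont * ((1+2*C₂)*ε) * n := by
    refine le_trans (le_abs_self _) (le_trans (hcont _ η hηY) ?_)
    rw [hn]
    exact mul_le_mul_of_nonneg_right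
      (mul_le_mul_of_nonneg_left hMuEp hCcont.le) (apply_nonneg N η)
  have hs1 : s_h u_h p ≤ C_stab * S * (K2 * ε) := by
    have h := hsCS u_h p
    rw [← hS] at h
    exact le_trans h (mul_le_mul_of_nonneg_left hsqp (mul_nonneg hCstab.le hSnn))
  clear_value η n S
  have hkey : C_coer * n^2 + S^2 ≤ A * ε * n + C_stab * S * (K2 * ε) := by
    have e1 : a_h η η = ℓ_h η - s_h u_h u_h + s_h u_h p - a_h (E p) η := by
      rw [hahη]; rw [hsplit] at heq1; linarith
    have e2 : a_h η η = (ℓ_h η - ℓ η) + (a u η - a_h u η) + a_h (u - E p) η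
        - s_h u_h u_h + s_h u_h p := by
      rw [e1, ← hdiff]; linarith [hex1]
    rw [hS2, hAdef]
    linarith [hcoe, e2, hinc1, hcont1, hs1]
  -- Step 5: Young inequalities (division-free)
  have hmid0 : C_coer^2*n^2 + C_coer*S^2 ≤ (A^2 + C_coer*C_stab^2*K2^2)*ε^2 :=
    rfem_young_aux C_coer C_stab K2 A n S ε hCcoer hkey
  rw [← hDdef] at hmid0
  have hn2 : n^2 ≤ D*ε^2/C_coer^2 := by
    rw [le_div_iff₀ (by positivity)]
    linarith [hmid0, mul_nonneg hCcoer.le (sq_nonneg S)]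
  have hS2b : S^2 ≤ D*ε^2/C_coer := by
    rw [le_div_iff₀ hCcoer]
    linarith [hmid0, mul_nonneg (mul_nonneg hCcoer.le hCcoer.le) (sq_nonneg n)]
  -- Step 6: triangle inequality and conclusion
  have htr : N (u - E u_h) ≤ K1 * ε + n := by
    have hid3 : u - E u_h = (u - E p) + (-η) := by rw [hη]; abel
    calc N (u - E u_h) ≤ N (u - E p) + N (-η) := by
          rw [hid3]; exact map_add_le_add N _ _
      _ = N (u - E p) + n := by rw [map_neg_eq_map, hn]
      _ ≤ K1 * ε + n := by linarith
  have hsq : (N (u - E u_h))^2 ≤ (K1*ε + n)^2 :=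
    pow_le_pow_left₀ (apply_nonneg N _) htr 2
  have hfin : (N (u - E u_h))^2 ≤ 2*K1^2*ε^2 + 2*n^2 := by
    linarith [hsq, sq_nonneg (K1*ε - n)]
  have hsuh : s_h u_h u_h = S^2 := hS2.symm
  have hCe : (1 + 2*K1^2 + (2/C_coer^2 + 1/C_coer)*D)*ε^2
      = ε^2 + 2*K1^2*ε^2 + 2*(D*ε^2/C_coer^2) + D*ε^2/C_coer := by ring
  rw [hsuh]
  linarith [hfin, hn2, hS2b, hεsq, hCe]
end

section
/- Suppose there are p ∈ X, q ∈ Y and ε ≥ 0 with M(u − p) ≤ ε and M(u − q) ≤ ε, and a constant C₃ ≥ 0 such that |ℓ_h(w) − ℓ(w)| + |a(u,w) − a_h(u,w)| ≤ C₃·ε·N(w) for all w in the range of E. Then there exists a constant C > 0, depending only on C_coer, C_cont, C_stab, c_ker, C_ker, C₁, C₂, C₃ (and not on u, u_h, p, q, ε), such that N(u − u_h)² + s_h(u_h,u_h) ≤ C·ε², i.e. the same optimal a priori bound holds for the discontinuous approximation u_h itself in the broken energy seminorm. -/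
set_option maxHeartbeats 1000000

private theorem rfem_aux_young (c A ε n t : ℝ) (hc : 0 < c) (ht : t * c = A^2) :
    2*(A*ε*n) ≤ c*n^2 + t*ε^2 := by
  nlinarith [sq_nonneg (c*n - A*ε), hc, ht, mul_pos hc hc]

private theorem rfem_aux_y2 (K ε S : ℝ) : 2*(K*ε*S) ≤ S^2 + K^2*ε^2 := by
  nlinarith [sq_nonneg (S - K*ε)]

private theorem rfem_aux_three (T a1 n r : ℝ) (hT0 : 0 ≤ T) (hT : T ≤ a1+n+r) :
    T^2 ≤ 3*(a1^2+n^2+r^2) := by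
  nlinarith [mul_self_le_mul_self hT0 hT, sq_nonneg (a1-n), sq_nonneg (a1-r), sq_nonneg (n-r)]



/-- A priori error bound for R-FEM (Theorem `thm:abstract`): the recovered
(conforming) approximation `E u_h` satisfies an optimal-order bound in the
broken energy norm `N`, with a constant depending only on the structural
constants and not on `u`, `u_h`, `p`, `q`, `ε` (nor on the spaces/forms). -/
theorem rfem_apriori_discontinuous
    (C_coer C_cont C_stab c_ker C_ker C₁ C₂ C₃ : ℝ)
    (hCcoer : 0 < C_coer) (hCcont : 0 < C_cont) (hCstab : 0 < C_stab)
    (hcker : 0 < c_ker) (hCker : 0 < C_ker)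
    (hC1 : 0 < C₁) (hC2 : 0 < C₂) (hC3 : 0 ≤ C₃) :
    ∃ C : ℝ, 0 < C ∧
      ∀ (W : Type) (_ : AddCommGroup W) (_ : Module ℝ W)
        (N M : Seminorm ℝ W)
        (X Y : Submodule ℝ W) (E : W →ₗ[ℝ] W)
        (s_h a_h a : W →ₗ[ℝ] W →ₗ[ℝ] ℝ)
        (ℓ ℓ_h : W →ₗ[ℝ] ℝ)
        (u u_h p q : W) (ε : ℝ),
        -- norm comparison
        (∀ w : W, N w ≤ C₁ * M w) →
        -- recovery operator: maps into Y, identity on Y, M-stable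
        (∀ w : W, E w ∈ Y) →
        (∀ v ∈ Y, E v = v) →
        (∀ w : W, M (E w) ≤ C₂ * M w) →
        -- stabilization: symmetric, nonnegative, quasi-Cauchy–Schwarz, kernel equivalence
        (∀ w v : W, s_h w v = s_h v w) →
        (∀ w : W, 0 ≤ s_h w w) →
        (∀ w v : W, s_h w v ≤ C_stab * Real.sqrt (s_h w w) * Real.sqrt (s_h v v)) →
        (∀ w : W, c_ker * s_h w w ≤ (N (w - E w))^2 ∧ (N (w - E w))^2 ≤ C_ker * s_h w w) →
        -- coercivity and continuity
        (∀ w ∈ Y, C_coer * (N w)^2 ≤ a_h w w) →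
        (∀ z : W, ∀ w ∈ Y, |a_h z w| ≤ C_cont * M z * N w) →
        -- R-FEM solution and exact solution
        u_h ∈ X →
        (∀ v_h ∈ X, a_h (E u_h) (E v_h) + s_h u_h v_h = ℓ_h (E v_h)) →
        (∀ v ∈ Y, a u v = ℓ v) →
        -- optimal approximation by projections
        p ∈ X → q ∈ Y → 0 ≤ ε → M (u - p) ≤ ε → M (u - q) ≤ ε →
        -- optimal-order inconsistency on the range of E
        (∀ w ∈ Set.range E, |ℓ_h w - ℓ w| + |a u w - a_h u w| ≤ C₃ * ε * N w) →
        (N (u - u_h))^2 + s_h u_h u_h ≤ C * ε^2 := by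
  obtain ⟨A, hAdef⟩ : ∃ x : ℝ, x = C₃ + C_cont * (1 + 2*C₂) := ⟨_, rfl⟩
  obtain ⟨B, hBdef⟩ : ∃ x : ℝ, x = 2*C₁*(1 + C₂) := ⟨_, rfl⟩
  obtain ⟨K, hKdef⟩ : ∃ x : ℝ, x = C_stab * B / Real.sqrt c_ker := ⟨_, rfl⟩
  obtain ⟨D, hDdef⟩ : ∃ x : ℝ, x = A^2/(2*C_coer) + K^2/2 := ⟨_, rfl⟩
  have hA0 : 0 ≤ A := by rw [hAdef]; positivity
  have hB0 : 0 < B := by rw [hBdef]; positivity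
  have hD0 : 0 ≤ D := by rw [hDdef]; positivity
  refine ⟨3*(C₁^2*(1+2*C₂)^2 + 2*D/C_coer + 2*C_ker*D) + 2*D, ?_, ?_⟩
  · have h1 : 0 < C₁^2*(1+2*C₂)^2 := by positivity
    have h2 : 0 ≤ 2*D/C_coer := by positivity
    have h3 : 0 ≤ 2*C_ker*D := by positivity
    linarith
  intro W _ _ N M X Y E s_h a_h a ℓ ℓ_h u u_h p q ε hNM hEY hEid hEst hsym hs0 hCS hker
    hcoer hcont huhX hscheme hexact hpX hqY hε hup huq hincons
  -- the conforming error component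
  obtain ⟨e, he_def⟩ : ∃ x : W, x = E u_h - E p := ⟨_, rfl⟩
  have heE : E (u_h - p) = e := by rw [map_sub, he_def]
  have heY : e ∈ Y := heE ▸ hEY (u_h - p)
  -- abbreviations
  obtain ⟨n, hn_def⟩ : ∃ x : ℝ, x = N e := ⟨_, rfl⟩
  obtain ⟨S, hS_def⟩ : ∃ x : ℝ, x = Real.sqrt (s_h u_h u_h) := ⟨_, rfl⟩
  have hn0 : 0 ≤ n := hn_def ▸ apply_nonneg N e
  have hS0 : 0 ≤ S := hS_def ▸ Real.sqrt_nonneg _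
  have hSsq : S^2 = s_h u_h u_h := by rw [hS_def, Real.sq_sqrt (hs0 u_h)]
  -- scheme tested with u_h - p
  have hs := hscheme (u_h - p) (X.sub_mem huhX hpX)
  rw [heE] at hs
  -- exact equation
  have hex : a u e = ℓ e := hexact e heY
  -- bilinear algebra
  have c1 : a_h e e = a_h (E u_h) e - a_h (E p) e := by
    simp only [he_def, map_sub, LinearMap.sub_apply]; ring
  have c2 : a_h (u - E p) e = a_h u e - a_h (E p) e := by
    simp only [map_sub, LinearMap.sub_apply]
  have c3 : s_h u_h (u_h - p) = s_h u_h u_h - s_h u_h p := map_sub (s_h u_h) u_h p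
  have hidentity : a_h e e
      = (ℓ_h e - ℓ e) + (a u e - a_h u e) + a_h (u - E p) e
        - s_h u_h u_h + s_h u_h p := by linarith [hs, hex, c1, c2, c3]
  -- approximation bounds
  have hMqp : M (q - p) ≤ 2*ε := by
    have h1 : M ((q - u) + (u - p)) ≤ M (q - u) + M (u - p) := map_add_le_add M _ _
    have h2 : M (q - u) = M (u - q) := map_sub_rev M q u
    have h3 : (q - u) + (u - p) = q - p := by abel
    rw [h3] at h1; linarith
  have hqEp : q - E p = E (q - p) := by rw [map_sub, hEid q hqY]
  have hMuEp : M (u - E p) ≤ (1 + 2*C₂) * ε := by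
    have h1 : M ((u - q) + (q - E p)) ≤ M (u - q) + M (q - E p) := map_add_le_add M _ _
    have h3 : (u - q) + (q - E p) = u - E p := by abel
    have h4 : M (q - E p) ≤ C₂ * M (q - p) := hqEp ▸ hEst (q - p)
    have h5 : C₂ * M (q - p) ≤ C₂ * (2*ε) := mul_le_mul_of_nonneg_left hMqp hC2.le
    rw [h3] at h1; linarith only [h1, h4, h5, huq]
  have hNpEp : N (p - E p) ≤ B * ε := by
    have h1 : N ((p - q) + (q - E p)) ≤ N (p - q) + N (q - E p) := map_add_le_add N _ _
    have h3 : (p - q) + (q - E p) = p - E p := by abel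
    have h4 : N (p - q) ≤ C₁ * M (p - q) := hNM _
    have h5 : M (p - q) = M (q - p) := map_sub_rev M p q
    have h6 : N (q - E p) ≤ C₁ * M (q - E p) := hNM _
    have h7 : M (q - E p) ≤ C₂ * M (q - p) := hqEp ▸ hEst (q - p)
    rw [h3] at h1
    rw [hBdef]
    have h8 : C₁ * M (p - q) ≤ C₁ * (2*ε) := by
      rw [h5]; exact mul_le_mul_of_nonneg_left hMqp hC1.le
    have h9 : C₁ * M (q - E p) ≤ C₁ * (C₂ * (2*ε)) := by
      refine mul_le_mul_of_nonneg_left ?_ hC1.le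
      calc M (q - E p) ≤ C₂ * M (q - p) := h7
        _ ≤ C₂ * (2*ε) := mul_le_mul_of_nonneg_left hMqp hC2.le
    linarith only [h1, h4, h6, h8, h9, h5.le, h5.ge]
  -- stabilization of p is small
  have hspp : c_ker * s_h p p ≤ (B*ε)^2 := by
    have h1 := (hker p).1
    have h2 : (N (p - E p))^2 ≤ (B*ε)^2 :=
      pow_le_pow_left₀ (apply_nonneg N _) hNpEp 2
    linarith only [h1, h2]
  have hspp0 : 0 ≤ s_h p p := hs0 p
  have hP : Real.sqrt (s_h p p) ≤ B*ε/Real.sqrt c_ker := by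
    have hsq : (B*ε/Real.sqrt c_ker)^2 = B^2*ε^2/c_ker := by
      rw [div_pow, Real.sq_sqrt hcker.le]; ring_nf
    have h1 : s_h p p ≤ B^2*ε^2/c_ker := by
      rw [le_div_iff₀ hcker]; linarith only [hspp]
    calc Real.sqrt (s_h p p) ≤ Real.sqrt (B^2*ε^2/c_ker) := Real.sqrt_le_sqrt h1
      _ = B*ε/Real.sqrt c_ker := by
          rw [← hsq, Real.sqrt_sq (by positivity)]
  -- quasi-Cauchy–Schwarz bound on the coupling term
  have hcoup : s_h u_h p ≤ K * ε * S := by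
    have h1 := hCS u_h p
    rw [← hS_def] at h1
    have h2 : C_stab * S * Real.sqrt (s_h p p) ≤ C_stab * S * (B*ε/Real.sqrt c_ker) :=
      mul_le_mul_of_nonneg_left hP (by positivity)
    have h3 : C_stab * S * (B*ε/Real.sqrt c_ker) = K * ε * S := by rw [hKdef]; ring
    linarith only [h1, h2, h3.le, h3.ge]
  -- continuity bound
  have hcontb : a_h (u - E p) e ≤ C_cont * (1 + 2*C₂) * ε * n := by
    have h1 := hcont (u - E p) e heY
    rw [← hn_def] at h1
    have h2 : a_h (u - E p) e ≤ C_cont * M (u - E p) * n := le_trans (le_abs_self _) h1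
    have h3 : C_cont * M (u - E p) * n ≤ C_cont * ((1+2*C₂)*ε) * n := by
      exact mul_le_mul_of_nonneg_right (mul_le_mul_of_nonneg_left hMuEp hCcont.le) hn0
    linarith only [h2, h3]
  -- inconsistency bound
  have hincb : (ℓ_h e - ℓ e) + (a u e - a_h u e) ≤ C₃ * ε * n := by
    have h1 := hincons e ⟨u_h - p, heE⟩
    rw [← hn_def] at h1
    have h2 : ℓ_h e - ℓ e ≤ |ℓ_h e - ℓ e| := le_abs_self _
    have h3 : a u e - a_h u e ≤ |a u e - a_h u e| := le_abs_self _
    have h4 : 0 ≤ |ℓ_h e - ℓ e| := abs_nonneg _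
    have h5 : 0 ≤ |a u e - a_h u e| := abs_nonneg _
    linarith only [h1, h2, h3, h4, h5]
  -- coercivity
  have hco : C_coer * n^2 ≤ a_h e e := hn_def ▸ hcoer e heY
  -- core inequality
  have hcore : C_coer * n^2 + S^2 ≤ A*ε*n + K*ε*S := by
    have hA' : C₃ * ε * n + C_cont * (1+2*C₂) * ε * n = A*ε*n := by rw [hAdef]; ring
    rw [hSsq]
    linarith only [hco, hidentity, hincb, hcontb, hcoup, hA'.le, hA'.ge]
  -- Young's inequalities
  have htA : (A^2/C_coer) * C_coer = A^2 := div_mul_cancel₀ _ (ne_of_gt hCcoer)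
  have hY1 : 2*(A*ε*n) ≤ C_coer*n^2 + (A^2/C_coer)*ε^2 :=
    rfem_aux_young C_coer A ε n _ hCcoer htA
  have hY2 : 2*(K*ε*S) ≤ S^2 + K^2*ε^2 := rfem_aux_y2 K ε S
  have h2D : (A^2/C_coer)*ε^2 + K^2*ε^2 = 2*D*ε^2 := by
    rw [hDdef]; field_simp
  have hboth : C_coer*n^2 + S^2 ≤ 2*D*ε^2 := by
    linarith only [hcore, hY1, hY2, h2D.le, h2D.ge]
  have hn2 : n^2 ≤ (2*D/C_coer)*ε^2 := by
    rw [div_mul_eq_mul_div, le_div_iff₀ hCcoer]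
    linarith only [hboth, sq_nonneg S]
  have hSb : S^2 ≤ 2*D*ε^2 := by
    linarith only [hboth, mul_nonneg hCcoer.le (sq_nonneg n)]
  -- nonconforming part
  obtain ⟨r, hr_def⟩ : ∃ x : ℝ, x = N (u_h - E u_h) := ⟨_, rfl⟩
  have hr0 : 0 ≤ r := hr_def ▸ apply_nonneg N _
  have hr2 : r^2 ≤ C_ker * (2*D) * ε^2 := by
    have h1 := (hker u_h).2
    rw [← hr_def, ← hSsq] at h1
    have h2 : C_ker * S^2 ≤ C_ker * (2*D*ε^2) := mul_le_mul_of_nonneg_left hSb hCker.le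
    linarith only [h1, h2]
  -- triangle inequality
  obtain ⟨a1, ha1_def⟩ : ∃ x : ℝ, x = N (u - E p) := ⟨_, rfl⟩
  have ha10 : 0 ≤ a1 := ha1_def ▸ apply_nonneg N _
  have ha1b : a1 ≤ C₁ * (1 + 2*C₂) * ε := by
    have h1 := hNM (u - E p)
    rw [← ha1_def] at h1
    have h2 : C₁ * M (u - E p) ≤ C₁ * ((1+2*C₂)*ε) := mul_le_mul_of_nonneg_left hMuEp hC1.le
    linarith only [h1, h2]
  have hT : N (u - u_h) ≤ a1 + n + r := by
    have hdec : u - u_h = (u - E p) + (-e) + (-(u_h - E u_h)) := by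
      rw [he_def]; abel
    calc N (u - u_h) = N ((u - E p) + (-e) + (-(u_h - E u_h))) := by rw [hdec]
      _ ≤ N ((u - E p) + (-e)) + N (-(u_h - E u_h)) := map_add_le_add N _ _
      _ ≤ N (u - E p) + N (-e) + N (-(u_h - E u_h)) := by
          linarith [map_add_le_add N (u - E p) (-e)]
      _ = a1 + n + r := by rw [map_neg_eq_map, map_neg_eq_map, ← ha1_def, ← hn_def, ← hr_def]
  -- conclude
  have hT0 : 0 ≤ N (u - u_h) := apply_nonneg N _
  have hTsq : (N (u - u_h))^2 ≤ 3*(a1^2 + n^2 + r^2) :=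
    rfem_aux_three _ a1 n r hT0 hT
  have ha1sq : a1^2 ≤ C₁^2*(1+2*C₂)^2*ε^2 := by
    linarith only [mul_self_le_mul_self ha10 ha1b]
  have hfin : s_h u_h u_h ≤ 2*D*ε^2 := by rw [← hSsq]; exact hSb
  linarith only [hTsq, ha1sq, hn2, hr2, hfin]
end
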